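/- The state-decoding threshold step works: with ρ the saturable nonlinearity (odd, ρ(x)=1 for x≥1, ρ(x)=x for |x|≤3/4), for any q of the form q = U(i) with 1 ≤ i ≤ m, the composite map q ↦ ρ(−4(−2q+1)) followed by adding 1 and applying ρ yields 1 if i = 1 (i.e., q = 1/2) and 0 if i ≥ 2. Concretely: ρ(ρ(−4(1 − 2·U(i))) + 1) = 1 if i = 1, and = 0 if i ≥ 2 — using 1 − 2U(i) = (−1)^i/2^i. -/
import Mathlib


/-- Unary-like encoding of Turing machine state `q_i`. -/
noncomputable def U (i : ℕ) : ℝ := ∑ k ∈ Finset.Icc 1 i, (-1 : ℝ) ^ (k + 1) / 2 ^ k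

lemma U_closed (i : ℕ) : U i = (1 - (-1/2 : ℝ) ^ i) / 3 := by
  induction i with
  | zero => simp [U]
  | succ n ih =>
      rw [U, Finset.sum_Icc_succ_top (by omega : 1 ≤ n + 1), ← U, ih]
      have hm : (-1/2:ℝ)^n = (-1)^n * (1/2)^n := by rw [← mul_pow]; norm_num
      rw [pow_succ, hm]
      ring_nf
      linarith [hm]

theorem state_decoding_threshold
    (ρ : ℝ → ℝ)
    (hodd : ∀ x : ℝ, ρ (-x) = -ρ x)
    (hsat : ∀ x : ℝ, 1 ≤ x → ρ x = 1)
    (hlin : ∀ x : ℝ, 0 ≤ x → x ≤ 3 / 4 → ρ x = x)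
    (m i : ℕ) (hi : 1 ≤ i) (him : i ≤ m) :
    (i = 1 → ρ (ρ (-4 * (1 - 2 * U i)) + 1) = 1) ∧
    (2 ≤ i → ρ (ρ (-4 * (1 - 2 * U i)) + 1) = 0) := by
  constructor
  · rintro rfl
    have h0 : U 1 = 1/2 := by rw [U_closed]; norm_num
    rw [h0]
    norm_num
    rw [hlin 0 le_rfl (by norm_num)]
    rw [zero_add]
    exact hsat 1 le_rfl
  · intro h2
    have hkey : (1/4 : ℝ) ≤ 1 - 2 * U i := by
      rw [U_closed]
      have : (-1/8 : ℝ) ≤ (-1/2) ^ i := by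
        rcases Nat.even_or_odd i with he | ho
        · have : (0:ℝ) ≤ (-1/2) ^ i := he.pow_nonneg _
          linarith
        · have hi3 : 3 ≤ i := by
            rcases ho with ⟨k, hk⟩; omega
          have h1 : ((-1:ℝ)/2) ^ i = -(1/2)^i := by
            have hm : (-1/2:ℝ)^i = (-1)^i * (1/2)^i := by rw [← mul_pow]; norm_num
            rw [hm, ho.neg_one_pow]; ring
          have h2' : ((1:ℝ)/2) ^ i ≤ (1/2)^3 :=
            pow_le_pow_of_le_one (by norm_num) (by norm_num) hi3
          rw [h1]; norm_num at h2' ⊢; linarith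
      linarith
    have h1 : ρ (-4 * (1 - 2 * U i)) = -1 := by
      have : -4 * (1 - 2 * U i) = -(4 * (1 - 2 * U i)) := by ring
      rw [this, hodd, hsat _ (by linarith)]
    rw [h1]
    norm_num
    exact hlin 0 le_rfl (by norm_num)
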